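/- Let C be a clique of size t in a directed graph G, and let G_C be the graph obtained from G by removing all edges incident (incoming or outgoing) to the vertices of C. Then minrank_q(G) ≤ minrank_q(G_C) ≤ minrank_q(G) + 1. -/

import Mathlib

/-- A matrix `A` fits a directed graph with edge relation `E` if it has 1's on the
diagonal and 0's at off-diagonal non-edges. -/
def Fits {V : Type*} {F : Type*} [Field F] (E : V → V → Prop)
    (A : Matrix V V F) : Prop :=
  (∀ v, A v v = 1) ∧ ∀ u v, u ≠ v → ¬ E u v → A u v = 0

/-- The minrank over `F` of the directed graph with edge relation `E`. -/
noncomputable def minrank (F : Type*) [Field F] {V : Type*} [Fintype V]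
    (E : V → V → Prop) : ℕ :=
  sInf {r | ∃ A : Matrix V V F, Fits E A ∧ A.rank = r}

/-!
Adding edges can only lower the minrank, which gives the lower bound. For the upper bound take
an optimal matrix `A` for `G`, clear the rows and columns indexed by `C` and put the all-ones
block on `C × C`; this is `D A D` plus a rank-one matrix, and it fits `G_C` because `C` is a
clique.
-/

theorem Matrix.rank_add_le {m n R : Type*} [Fintype n] [Field R] (A B : Matrix m n R) :
    (A + B).rank ≤ A.rank + B.rank := by
  unfold Matrix.rank
  rw [Matrix.mulVecLin_add]
  refine (Submodule.finrank_mono ?_).trans (Submodule.finrank_add_le_finrank_add_finrank _ _)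
  rintro _ ⟨y, rfl⟩
  exact Submodule.add_mem_sup ⟨y, rfl⟩ ⟨y, rfl⟩

/-- The graph `G_C`: edges of `G` inside `C` or inside its complement. -/
def splitOff {V : Type*} (E : V → V → Prop) (C : Set V) : V → V → Prop :=
  fun u v => E u v ∧ ((u ∈ C ∧ v ∈ C) ∨ (u ∉ C ∧ v ∉ C))

section

variable {V F : Type*} [Field F] {E E' : V → V → Prop}

theorem Fits.mono {A : Matrix V V F} (h : ∀ u v, E u v → E' u v) (hA : Fits E A) :
    Fits E' A :=
  ⟨hA.1, fun u v huv hE' => hA.2 u v huv (fun hE => hE' (h u v hE))⟩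

theorem fits_one [DecidableEq V] : Fits E (1 : Matrix V V F) :=
  ⟨fun v => Matrix.one_apply_eq v, fun _ _ huv _ => Matrix.one_apply_ne huv⟩

variable [Fintype V]

theorem fits_splitOff [DecidableEq V] {C : Set V} (hC : ∀ u ∈ C, ∀ v ∈ C, u ≠ v → E u v)
    {A : Matrix V V F} (hA : Fits E A) :
    Fits (splitOff E C) (Matrix.vecMulVec (C.indicator (1 : V → F)) (C.indicator 1) +
      Matrix.diagonal (Cᶜ.indicator (1 : V → F)) * A * Matrix.diagonal (Cᶜ.indicator 1)) := by
  refine ⟨fun v => ?_, fun u v huv hnE => ?_⟩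
  · by_cases hv : v ∈ C <;>
      simp [Matrix.vecMulVec_apply, Matrix.mul_diagonal, Matrix.diagonal_mul, hv, hA.1 v]
  · by_cases hu : u ∈ C <;> by_cases hv : v ∈ C
    · exact absurd ⟨hC u hu v hv huv, Or.inl ⟨hu, hv⟩⟩ hnE
    · simp [Matrix.vecMulVec_apply, Matrix.mul_diagonal, Matrix.diagonal_mul, hu, hv]
    · simp [Matrix.vecMulVec_apply, Matrix.mul_diagonal, Matrix.diagonal_mul, hu, hv]
    · have hAuv : A u v = 0 := hA.2 u v huv (fun h => hnE ⟨h, Or.inr ⟨hu, hv⟩⟩)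
      simp [Matrix.vecMulVec_apply, Matrix.mul_diagonal, Matrix.diagonal_mul, hu, hv, hAuv]

theorem minrank_le_rank {A : Matrix V V F} (hA : Fits E A) : minrank F E ≤ A.rank :=
  Nat.sInf_le ⟨A, hA, rfl⟩

theorem exists_fits_rank_eq_minrank : ∃ A : Matrix V V F, Fits E A ∧ A.rank = minrank F E := by
  classical
  exact Nat.sInf_mem (s := {r | ∃ A : Matrix V V F, Fits E A ∧ A.rank = r})
    ⟨_, 1, fits_one, rfl⟩

theorem minrank_anti (h : ∀ u v, E u v → E' u v) : minrank F E' ≤ minrank F E := by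
  obtain ⟨A, hA, hrank⟩ := exists_fits_rank_eq_minrank (F := F) (E := E)
  exact hrank ▸ minrank_le_rank (hA.mono h)

theorem minrank_splitOff_le {C : Set V} (hC : ∀ u ∈ C, ∀ v ∈ C, u ≠ v → E u v) :
    minrank F (splitOff E C) ≤ minrank F E + 1 := by
  classical
  obtain ⟨A, hA, hrank⟩ := exists_fits_rank_eq_minrank (F := F) (E := E)
  set x : V → F := C.indicator 1
  set D : Matrix V V F := Matrix.diagonal (Cᶜ.indicator 1)
  calc minrank F (splitOff E C)
      ≤ (Matrix.vecMulVec x x + D * A * D).rank := minrank_le_rank (fits_splitOff hC hA)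
    _ ≤ (Matrix.vecMulVec x x).rank + (D * A * D).rank := Matrix.rank_add_le _ _
    _ ≤ 1 + A.rank := add_le_add (Matrix.rank_vecMulVec_le _ _)
        ((Matrix.rank_mul_le_left _ _).trans (Matrix.rank_mul_le_right _ _))
    _ = minrank F E + 1 := by rw [hrank, add_comm]

end

theorem minrank_remove_clique_edges_bounds {V : Type*} [Fintype V] {F : Type*} [Field F]
    (E : V → V → Prop) (C : Set V)
    (hclique : ∀ u ∈ C, ∀ v ∈ C, u ≠ v → E u v) :
    minrank F E ≤ minrank F (fun u v => E u v ∧ ((u ∈ C ∧ v ∈ C) ∨ (u ∉ C ∧ v ∉ C))) ∧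
    minrank F (fun u v => E u v ∧ ((u ∈ C ∧ v ∈ C) ∨ (u ∉ C ∧ v ∉ C)))
      ≤ minrank F E + 1 :=
  ⟨minrank_anti fun _ _ h => h.1, minrank_splitOff_le hclique⟩
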